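/- Let k be a field of characteristic zero and let f_1,...,f_n ∈ k[[X_1,...,X_n]] generate a proper ideal I such that dim_k k[[X_1,...,X_n]]/(f_1,...,f_n) < +∞ as a k-vector space. Then J_X(f_1,...,f_n)·(X_1,...,X_n) ⊆ (f_1,...,f_n); in other words, the class of the Jacobian J_X(f_1,...,f_n) in the Artinian algebra k[[X_1,...,X_n]]/(f_1,...,f_n) is annihilated by the maximal ideal, i.e. it lies in the socle of that algebra. -/

import Mathlib

/-!
Let `A = k[[X]]/I` and let `x_j ∈ A` be the classes of the variables. Since `A` is Artinian the
`x_j` are nilpotent, so modulo `I` a power series and its partial derivatives agree with those of a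
polynomial truncation, and `A` is generated by the `x_j`. Writing
`f_i(x) ⊗ 1 - 1 ⊗ f_i(x) = ∑_j c_ij (x_j ⊗ 1 - 1 ⊗ x_j)` in `A ⊗ A`, the Bezoutian `Δ = det (c_ij)`
satisfies `(y ⊗ 1) Δ = (1 ⊗ y) Δ` for all `y`, and multiplication sends it to the class of the
Jacobian. For `z` nilpotent and any functional `ψ`, `ψ (z J)` is then the trace of a nilpotent
endomorphism of `A`, hence zero.
-/

/-- The formal partial derivative `∂f/∂X_j` of a multivariate formal power series. -/
noncomputable def psDeriv {A : Type*} [CommRing A] {n : ℕ} (j : Fin n)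
    (f : MvPowerSeries (Fin n) A) : MvPowerSeries (Fin n) A :=
  fun m => (m j + 1 : ℕ) * MvPowerSeries.coeff (R := A) (m + Finsupp.single j 1) f

/-- The Jacobian `J_X(f) = det (∂f_i/∂X_j)` of `n` formal power series in `n` variables. -/
noncomputable def jacobianPS {A : Type*} [CommRing A] {n : ℕ}
    (f : Fin n → MvPowerSeries (Fin n) A) : MvPowerSeries (Fin n) A :=
  Matrix.det (Matrix.of fun i j => psDeriv j (f i))

open TensorProduct Matrix

section TraceArgument

variable {k A : Type*} [Field k] [CommRing A] [Algebra k A]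

/-- `a ⊗ b ↦ (v ↦ ψ (a * v) • b)`. -/
noncomputable def dualMulEnd (ψ : Module.Dual k A) : A ⊗[k] A →ₗ[k] Module.End k A :=
  dualTensorHom k A A ∘ₗ map ((LinearMap.mul k A).compr₂ ψ) LinearMap.id

theorem dualMulEnd_tmul (ψ : Module.Dual k A) (a b : A) :
    dualMulEnd ψ (a ⊗ₜ b) = (ψ ∘ₗ LinearMap.mulLeft k a).smulRight b := rfl

theorem dualMulEnd_tmul_mul (ψ : Module.Dual k A) (a b : A) (β : A ⊗[k] A) :
    dualMulEnd ψ ((a ⊗ₜ b) * β) =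
      LinearMap.mulLeft k b ∘ₗ dualMulEnd ψ β ∘ₗ LinearMap.mulLeft k a := by
  induction β using TensorProduct.induction_on with
  | zero => simp
  | tmul c d => ext v; simp [dualMulEnd_tmul, mul_left_comm]
  | add u w hu hw => simp [mul_add, hu, hw, LinearMap.add_comp, LinearMap.comp_add]

theorem trace_dualMulEnd [FiniteDimensional k A] (ψ : Module.Dual k A) (β : A ⊗[k] A) :
    LinearMap.trace k A (dualMulEnd ψ β) = ψ (Algebra.TensorProduct.lmul' k β) := by
  induction β using TensorProduct.induction_on with
  | zero => simp
  | tmul a b => simp [dualMulEnd_tmul]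
  | add u w hu hw => simp [hu, hw]

/-- For every functional `ψ`, `ψ (z * lmul' Δ)` is the trace of `L_z ∘ dualMulEnd ψ Δ`, and the
hypothesis on `Δ` makes these two endomorphisms commute, so the composite is nilpotent. -/
theorem mul_lmul'_eq_zero_of_isNilpotent [FiniteDimensional k A] {Δ : A ⊗[k] A}
    (hΔ : ∀ y : A, (y ⊗ₜ 1) * Δ = (1 ⊗ₜ y) * Δ) {z : A} (hz : IsNilpotent z) :
    z * Algebra.TensorProduct.lmul' k Δ = 0 := by
  rw [← Module.forall_dual_apply_eq_zero_iff k]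
  intro ψ
  have hcomm : Commute (LinearMap.mulLeft k z) (dualMulEnd ψ Δ) := by
    have := congrArg (dualMulEnd ψ) (hΔ z)
    simp only [dualMulEnd_tmul_mul, LinearMap.mulLeft_one, LinearMap.id_comp,
      LinearMap.comp_id] at this
    exact this.symm
  have hzΔ : z * Algebra.TensorProduct.lmul' k Δ =
      Algebra.TensorProduct.lmul' k ((1 ⊗ₜ z) * Δ) := by
    simp
  rw [hzΔ, ← trace_dualMulEnd, dualMulEnd_tmul_mul, LinearMap.mulLeft_one, LinearMap.comp_id]
  exact (LinearMap.isNilpotent_trace_of_isNilpotent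
    (hcomm.isNilpotent_mul_right ((LinearMap.isNilpotent_mulLeft_iff k z).2 hz))).eq_zero

end TraceArgument

section Bezoutian

open MvPolynomial

variable {R A σ : Type*} [CommRing R] [CommRing A] [Algebra R A] [Fintype σ]

theorem exists_tmul_sub_tmul_eq_sum [DecidableEq σ] (x : σ → A) (p : MvPolynomial σ R) :
    ∃ c : σ → A ⊗[R] A,
      aeval x p ⊗ₜ 1 - 1 ⊗ₜ aeval x p = ∑ j, c j * (x j ⊗ₜ 1 - 1 ⊗ₜ x j) ∧
      ∀ j, Algebra.TensorProduct.lmul' R (c j) = aeval x (pderiv j p) := by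
  induction p using MvPolynomial.induction_on with
  | C a =>
    refine ⟨0, ?_, fun j => by simp⟩
    simp [Algebra.algebraMap_eq_smul_one, TensorProduct.smul_tmul]
  | add p q hp hq =>
    obtain ⟨c, hc, hμc⟩ := hp
    obtain ⟨d, hd, hμd⟩ := hq
    refine ⟨c + d, ?_, fun j => by simp [hμc, hμd]⟩
    simp only [map_add, TensorProduct.add_tmul, TensorProduct.tmul_add, Pi.add_apply, add_mul,
      Finset.sum_add_distrib, ← hc, ← hd]
    abel
  | mul_X p i hp =>
    obtain ⟨c, hc, hμc⟩ := hp
    refine ⟨fun j => Pi.single i (aeval x p ⊗ₜ 1) j + (1 ⊗ₜ x i) * c j, ?_, fun j => ?_⟩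
    · have hsplit : (aeval x p * x i) ⊗ₜ[R] (1 : A) - 1 ⊗ₜ (aeval x p * x i) =
          (aeval x p ⊗ₜ 1) * (x i ⊗ₜ 1 - 1 ⊗ₜ x i) +
            (1 ⊗ₜ x i) * (aeval x p ⊗ₜ 1 - 1 ⊗ₜ aeval x p) := by
        simp only [mul_sub, Algebra.TensorProduct.tmul_mul_tmul, mul_one, one_mul]
        rw [mul_comm (x i) (aeval x p)]
        abel
      simp [hsplit, hc, add_mul, Finset.sum_add_distrib, Finset.mul_sum, mul_assoc, Pi.single_apply]
    · rcases eq_or_ne j i with rfl | hji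
      · simp [hμc, pderiv_X, mul_comm]
      · simp [hμc, pderiv_X, hji, hji.symm]

/-- `Δ` is the determinant of the Bezoutian matrix `c i j` with
`P i (x) ⊗ 1 - 1 ⊗ P i (x) = ∑ j, c i j * (x j ⊗ 1 - 1 ⊗ x j)`; since the left side vanishes,
Cramer's rule gives `Δ * (x j ⊗ 1 - 1 ⊗ x j) = 0`. -/
theorem exists_mul_tmul_sub_tmul_eq_zero_of_aeval_eq_zero [DecidableEq σ] (x : σ → A)
    (P : σ → MvPolynomial σ R) (hP : ∀ i, aeval x (P i) = 0) :
    ∃ Δ : A ⊗[R] A, (∀ j, Δ * (x j ⊗ₜ 1 - 1 ⊗ₜ x j) = 0) ∧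
      Algebra.TensorProduct.lmul' R Δ = (Matrix.of fun i j => aeval x (pderiv j (P i))).det := by
  choose c hc hμc using fun i => exists_tmul_sub_tmul_eq_sum x (P i)
  let M : Matrix σ σ (A ⊗[R] A) := Matrix.of c
  have hMv : M *ᵥ (fun j => x j ⊗ₜ 1 - 1 ⊗ₜ x j) = 0 := by
    ext i
    simpa [M, Matrix.mulVec, dotProduct, hP] using (hc i).symm
  refine ⟨M.det, fun j => ?_, ?_⟩
  · have hdet := congrArg (M.adjugate *ᵥ ·) hMv
    simp only [mulVec_mulVec, adjugate_mul, smul_mulVec, one_mulVec, mulVec_zero] at hdet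
    simpa using congrFun hdet j
  · rw [AlgHom.map_det]
    congr 1
    ext i j
    exact hμc i j

theorem tmul_mul_eq_tmul_mul_of_aeval_surjective (x : σ → A)
    (hx : Function.Surjective (aeval (R := R) x)) {Δ : A ⊗[R] A}
    (hΔ : ∀ j, Δ * (x j ⊗ₜ 1 - 1 ⊗ₜ x j) = 0) (y : A) :
    (y ⊗ₜ 1) * Δ = (1 ⊗ₜ y) * Δ := by
  classical
  obtain ⟨p, rfl⟩ := hx y
  obtain ⟨c, hc, -⟩ := exists_tmul_sub_tmul_eq_sum x p
  rw [← sub_eq_zero, ← sub_mul, hc, Finset.sum_mul]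
  exact Finset.sum_eq_zero fun j _ => by rw [mul_assoc, mul_comm _ Δ, hΔ, mul_zero]

theorem mul_det_aeval_pderiv_eq_zero_of_isNilpotent {k : Type*} [Field k] [Algebra k A]
    [FiniteDimensional k A] [DecidableEq σ] (x : σ → A)
    (hx : Function.Surjective (aeval (R := k) x)) (P : σ → MvPolynomial σ k)
    (hP : ∀ i, aeval x (P i) = 0) {z : A} (hz : IsNilpotent z) :
    z * (Matrix.of fun i j => aeval x (pderiv j (P i))).det = 0 := by
  obtain ⟨Δ, hΔ, hμΔ⟩ := exists_mul_tmul_sub_tmul_eq_zero_of_aeval_eq_zero x P hP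
  rw [← hμΔ]
  exact mul_lmul'_eq_zero_of_isNilpotent (tmul_mul_eq_tmul_mul_of_aeval_surjective x hx hΔ) hz

end Bezoutian

theorem Derivation.mem_span_pow_of_mem_span_pow_succ {R A ι : Type*} [CommRing R] [CommRing A]
    [Algebra R A] (D : Derivation R A A) (x : ι → A) (r : ℕ) {a : A}
    (ha : a ∈ Ideal.span (Set.range fun i => x i ^ (r + 1))) :
    D a ∈ Ideal.span (Set.range fun i => x i ^ r) := by
  have hle : Ideal.span (Set.range fun i => x i ^ (r + 1)) ≤
      Ideal.span (Set.range fun i => x i ^ r) :=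
    Ideal.span_le.2 <| Set.range_subset_iff.2 fun i => by
      rw [pow_succ]; exact Ideal.mul_mem_right _ _ (Ideal.subset_span ⟨i, rfl⟩)
  induction ha using Submodule.span_induction with
  | mem y hy =>
    obtain ⟨i, rfl⟩ := hy
    rw [Derivation.leibniz_pow, Nat.add_sub_cancel, smul_comm, smul_eq_mul]
    exact Ideal.mul_mem_right _ _ (Ideal.subset_span ⟨i, rfl⟩)
  | zero => simp
  | add y z _ _ hy hz => rw [map_add]; exact add_mem hy hz
  | smul b y hy hDy =>
    rw [smul_eq_mul, Derivation.leibniz, smul_eq_mul, smul_eq_mul]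
    exact add_mem (Ideal.mul_mem_left _ _ hDy) (Ideal.mul_mem_right _ _ (hle hy))

theorem exists_pow_eq_zero_of_mem_jacobson_bot {R A : Type*} [CommRing R] [CommRing A]
    [IsArtinianRing A] {q : R →+* A} (hq : Function.Surjective q) :
    ∃ t : ℕ, ∀ a ∈ Ideal.jacobson (⊥ : Ideal R), q a ^ t = 0 := by
  obtain ⟨t, ht⟩ := IsArtinianRing.isNilpotent_jacobson_bot (R := A)
  refine ⟨t, fun a ha => ?_⟩
  have hqa : q a ∈ Ideal.jacobson (⊥ : Ideal A) := Ideal.mem_jacobson_bot.2 fun y => by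
    obtain ⟨s, rfl⟩ := hq y
    simpa using (Ideal.mem_jacobson_bot.1 ha s).map q
  simpa [ht] using Ideal.pow_mem_pow hqa t

namespace MvPowerSeries

variable {σ R : Type*} [CommRing R]

theorem mem_span_X_pow_image_of_coeff_eq_zero (r : ℕ) (s : Finset σ) {φ : MvPowerSeries σ R}
    (h : ∀ m : σ →₀ ℕ, (∀ i ∈ s, m i < r) → coeff m φ = 0) :
    φ ∈ Ideal.span ((fun i => X i ^ r) '' s) := by
  classical
  induction s using Finset.induction_on generalizing φ with
  | empty =>
    have : φ = 0 := ext fun m => by simpa using h m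
    simp [this]
  | insert a s _ ih =>
    let ψ : MvPowerSeries σ R := fun m => if m a < r then coeff m φ else 0
    have hψ : ψ ∈ Ideal.span ((fun i => X i ^ r) '' s) := by
      refine ih fun m hm => ?_
      change (if m a < r then coeff m φ else 0) = 0
      split_ifs with hma
      · exact h m (by simpa [hma] using hm)
      · rfl
    have hdvd : X a ^ r ∣ φ - ψ := by
      refine X_pow_dvd_iff.2 fun m hma => ?_
      change coeff m φ - (if m a < r then coeff m φ else 0) = 0
      simp [hma]
    obtain ⟨g, hg⟩ := hdvd
    rw [← sub_add_cancel φ ψ, hg]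
    refine add_mem ?_ (Ideal.span_mono (by simp [Set.image_insert_eq]) hψ)
    exact Ideal.mul_mem_right _ _ (Ideal.subset_span ⟨a, by simp, rfl⟩)

theorem mem_span_X_pow_of_coeff_eq_zero [Fintype σ] (r : ℕ) {φ : MvPowerSeries σ R}
    (h : ∀ m : σ →₀ ℕ, (∀ i, m i < r) → coeff m φ = 0) :
    φ ∈ Ideal.span (Set.range fun i => X i ^ r) := by
  simpa using mem_span_X_pow_image_of_coeff_eq_zero r Finset.univ
    fun m hm => h m fun i => hm i (Finset.mem_univ i)

theorem X_mem_jacobson_bot {k : Type*} [Field k] (i : σ) :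
    X i ∈ Ideal.jacobson (⊥ : Ideal (MvPowerSeries σ k)) :=
  Ideal.mem_jacobson_bot.2 fun y => by simp [isUnit_iff_constantCoeff]

noncomputable def truncBox [Fintype σ] [DecidableEq σ] (r : ℕ) :
    MvPowerSeries σ R →ₗ[R] MvPolynomial σ R :=
  trunc' R (Finsupp.equivFunOnFinite.symm fun _ => r)

theorem sub_truncBox_mem_span_X_pow [Fintype σ] [DecidableEq σ] (r : ℕ) (φ : MvPowerSeries σ R) :
    φ - ↑(truncBox r φ) ∈ Ideal.span (Set.range fun i => X i ^ (r + 1)) := by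
  refine mem_span_X_pow_of_coeff_eq_zero (r + 1) fun m hm => ?_
  have hle : m ≤ Finsupp.equivFunOnFinite.symm fun _ => r := fun i => by
    simpa using Nat.lt_succ_iff.1 (hm i)
  simp [truncBox, coeff_trunc', hle]

variable {A : Type*} [CommRing A] [Algebra R A]

theorem aeval_X_comp (q : MvPowerSeries σ R →ₐ[R] A) (p : MvPolynomial σ R) :
    MvPolynomial.aeval (fun i => q (X i)) p = q p := by
  induction p using MvPolynomial.induction_on with
  | C a => simp [c_eq_algebraMap]
  | add p p' hp hp' => simp [hp, hp']
  | mul_X p i hp => simp [hp]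

theorem span_X_pow_le_ker {q : MvPowerSeries σ R →ₐ[R] A} {r s : ℕ} (hq : ∀ i, q (X i) ^ r = 0)
    (hs : r ≤ s) : Ideal.span (Set.range fun i => X i ^ s) ≤ RingHom.ker q :=
  Ideal.span_le.2 <| Set.range_subset_iff.2 fun i => by
    simp [map_pow, pow_eq_zero_of_le hs (hq i)]

variable [Fintype σ] [DecidableEq σ]

theorem aeval_truncBox {q : MvPowerSeries σ R →ₐ[R] A} {r : ℕ} (hq : ∀ i, q (X i) ^ r = 0)
    (φ : MvPowerSeries σ R) : MvPolynomial.aeval (fun i => q (X i)) (truncBox r φ) = q φ := by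
  rw [aeval_X_comp, eq_comm, ← sub_eq_zero, ← map_sub]
  exact span_X_pow_le_ker hq r.le_succ (sub_truncBox_mem_span_X_pow r φ)

theorem aeval_pderiv_truncBox {q : MvPowerSeries σ R →ₐ[R] A} {r : ℕ}
    (hq : ∀ i, q (X i) ^ r = 0) (φ : MvPowerSeries σ R) (j : σ) :
    MvPolynomial.aeval (fun i => q (X i)) (MvPolynomial.pderiv j (truncBox r φ)) =
      q (pderiv R j φ) := by
  rw [aeval_X_comp, ← pderiv_coe, eq_comm, ← sub_eq_zero, ← map_sub, ← map_sub]
  exact span_X_pow_le_ker hq le_rfl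
    ((pderiv R j).mem_span_pow_of_mem_span_pow_succ _ r (sub_truncBox_mem_span_X_pow r φ))

end MvPowerSeries

theorem psDeriv_eq_pderiv {A : Type*} [CommRing A] {n : ℕ} (j : Fin n)
    (f : MvPowerSeries (Fin n) A) : psDeriv j f = MvPowerSeries.pderiv A j f := by
  ext m
  rw [MvPowerSeries.coeff_pderiv, mul_comm]
  simp [psDeriv, MvPowerSeries.coeff_apply]

theorem stmt1_general {k : Type} [Field k] {n : ℕ}
    (f : Fin n → MvPowerSeries (Fin n) k)
    (hfin : FiniteDimensional k
      (MvPowerSeries (Fin n) k ⧸ Ideal.span (Set.range f))) :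
    ∀ g ∈ Ideal.span (Set.range (MvPowerSeries.X : Fin n → MvPowerSeries (Fin n) k)),
      jacobianPS f * g ∈ Ideal.span (Set.range f) := by
  intro g hg
  set I := Ideal.span (Set.range f)
  let q := Ideal.Quotient.mkₐ k I
  have hq : Function.Surjective q := Ideal.Quotient.mkₐ_surjective k I
  have : IsArtinianRing (MvPowerSeries (Fin n) k ⧸ I) := isArtinian_of_tower k inferInstance
  obtain ⟨r, hr⟩ := exists_pow_eq_zero_of_mem_jacobson_bot (q := q.toRingHom) hq
  have hqX : ∀ i, q (MvPowerSeries.X i) ^ r = 0 :=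
    fun i => hr _ (MvPowerSeries.X_mem_jacobson_bot i)
  let P := fun i => MvPowerSeries.truncBox r (f i)
  have hjac : q (jacobianPS f) =
      (Matrix.of fun i j => MvPolynomial.aeval (fun l => q (MvPowerSeries.X l))
        (MvPolynomial.pderiv j (P i))).det := by
    rw [jacobianPS, AlgHom.map_det]
    congr 1
    ext i j
    simp [P, MvPowerSeries.aeval_pderiv_truncBox hqX, psDeriv_eq_pderiv]
  have hgnil : IsNilpotent (q g) := ⟨r, hr g (Ideal.span_le.2 (Set.range_subset_iff.2
    MvPowerSeries.X_mem_jacobson_bot) hg)⟩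
  rw [← Ideal.Quotient.eq_zero_iff_mem, ← Ideal.Quotient.mkₐ_eq_mk k, map_mul, hjac, mul_comm]
  refine mul_det_aeval_pderiv_eq_zero_of_isNilpotent _ (fun y => ?_) P (fun i => ?_) hgnil
  · obtain ⟨φ, rfl⟩ := hq y
    exact ⟨_, MvPowerSeries.aeval_truncBox hqX φ⟩
  · rw [MvPowerSeries.aeval_truncBox hqX, Ideal.Quotient.mkₐ_eq_mk,
      Ideal.Quotient.eq_zero_iff_mem]
    exact Ideal.subset_span (Set.mem_range_self i)

/-- If `k` has characteristic zero, the ideal `I = (f_1,…,f_n)` is proper and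
`k[[X_1,…,X_n]]/I` is a finite dimensional `k`-vector space, then
`J_X(f_1,…,f_n)·(X_1,…,X_n) ⊆ I`, i.e. the class of the Jacobian lies in the socle of
the Artinian algebra `k[[X]]/I`. -/
theorem stmt1 {k : Type} [Field k] [CharZero k] {n : ℕ}
    (f : Fin n → MvPowerSeries (Fin n) k)
    (hI : Ideal.span (Set.range f) ≠ ⊤)
    (hfin : FiniteDimensional k
      (MvPowerSeries (Fin n) k ⧸ Ideal.span (Set.range f))) :
    ∀ g ∈ Ideal.span (Set.range (MvPowerSeries.X : Fin n → MvPowerSeries (Fin n) k)),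
      jacobianPS f * g ∈ Ideal.span (Set.range f) :=
  stmt1_general f hfin
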